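/- For each p, let X_{p1},…,X_{pp} be independent real random variables with mean zero and variance one satisfying the Lindeberg condition (1/p)∑_k E[X_{pk}²·1{|X_{pk}|>ε√p}] → 0 for all ε > 0. Then for any sequence of complex p×p matrices A_p with uniformly bounded operator norms, setting x_p = (X_{p1},…,X_{pp}), one has (x_pᵀ A_p x_p − tr(A_p))/p → 0 in probability as p → ∞. -/

import Mathlib

open MeasureTheory ProbabilityTheory Filter Matrix

section AuxLemmas

variable {Ω : Type*} [MeasurableSpace Ω] {μ : Measure Ω} [IsProbabilityMeasure μ]
  {n : ℕ} {X : Fin n → Ω → ℝ}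

/-- Markov's inequality, packaged. -/
lemma markov_meas (f : Ω → ℝ) (h0 : ∀ ω, 0 ≤ f ω) (hi : Integrable f μ) {t : ℝ} (ht : 0 < t) :
    μ {ω | t ≤ f ω} ≤ ENNReal.ofReal ((∫ ω, f ω ∂μ) / t) := by
  have h := mul_meas_ge_le_integral_of_nonneg (μ := μ) (ae_of_all μ h0) hi t
  rw [mul_comm] at h
  rw [← ENNReal.ofReal_toReal (measure_ne_top μ {ω | t ≤ f ω})]
  exact ENNReal.ofReal_le_ofReal ((le_div_iff₀ ht).2 h)

/-- Chebyshev for complex-valued functions. -/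
lemma cheb_complex (g : Ω → ℂ) (hi : Integrable (fun ω => Complex.normSq (g ω)) μ)
    {t : ℝ} (ht : 0 < t) :
    μ {ω | t ≤ ‖ g ω‖} ≤
      ENNReal.ofReal ((∫ ω, Complex.normSq (g ω) ∂μ) / t ^ 2) := by
  have hsub : {ω | t ≤ ‖ g ω‖} ⊆ {ω | t ^ 2 ≤ Complex.normSq (g ω)} := by
    intro ω hω
    simp only [Set.mem_setOf_eq] at hω ⊢
    calc t ^ 2 ≤ ‖ g ω‖ ^ 2 := by nlinarith [ht.le]
      _ = Complex.normSq (g ω) := Complex.sq_norm _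
  exact (measure_mono hsub).trans
    (markov_meas _ (fun ω => Complex.normSq_nonneg _) hi (by positivity))

lemma indep_one_three (hmeas : ∀ k, Measurable (X k))
    (hindep : iIndepFun X μ)
    {i j k l : Fin n} (hij : i ≠ j) (hik : i ≠ k) (hil : i ≠ l) :
    IndepFun (X i) (fun ω => X j ω * (X k ω * X l ω)) μ := by
  classical
  have hdisj : Disjoint ({i} : Finset (Fin n)) ({j, k, l} : Finset (Fin n)) := by
    simp [Finset.disjoint_left, hij, hik, hil]
  have h := hindep.indepFun_finset {i} {j, k, l} hdisj hmeas
  have hj : j ∈ ({j, k, l} : Finset (Fin n)) := by simp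
  have hk : k ∈ ({j, k, l} : Finset (Fin n)) := by simp
  have hl : l ∈ ({j, k, l} : Finset (Fin n)) := by simp
  exact h.comp (_mγ := inferInstance) (φ := fun v => v ⟨i, Finset.mem_singleton_self i⟩)
    (ψ := fun v => v ⟨j, hj⟩ * (v ⟨k, hk⟩ * v ⟨l, hl⟩))
    (measurable_pi_apply _)
    (by fun_prop)

lemma integral_isolated (hmeas : ∀ k, Measurable (X k))
    (hindep : iIndepFun X μ)
    (hmean : ∀ k, ∫ ω, X k ω ∂μ = 0)
    {i j k l : Fin n} (hij : i ≠ j) (hik : i ≠ k) (hil : i ≠ l) :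
    ∫ ω, X i ω * (X j ω * (X k ω * X l ω)) ∂μ = 0 := by
  have h := (indep_one_three hmeas hindep hij hik hil).integral_fun_mul_eq_mul_integral
    (hmeas i).aestronglyMeasurable
    (((hmeas j).mul ((hmeas k).mul (hmeas l))).aestronglyMeasurable)
  rw [h, hmean i, zero_mul]

lemma indep_sq (hindep : iIndepFun X μ)
    {k j : Fin n} (hkj : k ≠ j) :
    IndepFun (fun ω => X k ω ^ 2) (fun ω => X j ω ^ 2) μ :=
  (hindep.indepFun hkj).comp (measurable_id.pow_const 2) (measurable_id.pow_const 2)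

lemma integral_sq_sq (hmeas : ∀ k, Measurable (X k))
    (hindep : iIndepFun X μ)
    (hvar : ∀ k, ∫ ω, (X k ω) ^ 2 ∂μ = 1)
    {k j : Fin n} (hkj : k ≠ j) :
    ∫ ω, X k ω ^ 2 * X j ω ^ 2 ∂μ = 1 := by
  rw [(indep_sq hindep hkj).integral_fun_mul_eq_mul_integral
      ((hmeas k).pow_const 2).aestronglyMeasurable ((hmeas j).pow_const 2).aestronglyMeasurable,
    hvar k, hvar j, one_mul]

lemma memL2_mul (hmeas : ∀ k, Measurable (X k))
    (hindep : iIndepFun X μ)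
    (hL2 : ∀ k, MemLp (X k) 2 μ)
    {k j : Fin n} (hkj : k ≠ j) :
    MemLp (fun ω => X k ω * X j ω) 2 μ := by
  rw [memLp_two_iff_integrable_sq (f := fun ω => X k ω * X j ω) (((hmeas k).mul (hmeas j)).aestronglyMeasurable)]
  have heq : (fun ω => (X k ω * X j ω) ^ 2) = fun ω => X k ω ^ 2 * X j ω ^ 2 := by
    funext ω; ring
  rw [heq]
  exact (indep_sq hindep hkj).integrable_mul ((hL2 k).integrable_sq) ((hL2 j).integrable_sq)

lemma integrable_four (hmeas : ∀ k, Measurable (X k))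
    (hindep : iIndepFun X μ)
    (hL2 : ∀ k, MemLp (X k) 2 μ)
    {i j k l : Fin n} (hij : i ≠ j) (hkl : k ≠ l) :
    Integrable (fun ω => (X i ω * X j ω) * (X k ω * X l ω)) μ := by
  haveI : ENNReal.HolderTriple 2 2 1 := ⟨by simp [ENNReal.inv_two_add_inv_two]⟩
  have h := (memL2_mul hmeas hindep hL2 hkl).smul (φ := fun ω => X i ω * X j ω)
    (memL2_mul hmeas hindep hL2 hij) (r := 1)
  exact memLp_one_iff_integrable.mp h

lemma integral_four_eq (hmeas : ∀ k, Measurable (X k))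
    (hindep : iIndepFun X μ)
    (hmean : ∀ k, ∫ ω, X k ω ∂μ = 0)
    (hvar : ∀ k, ∫ ω, (X k ω) ^ 2 ∂μ = 1)
    {i j k l : Fin n} (hij : i ≠ j) (hkl : k ≠ l) :
    ∫ ω, (X i ω * X j ω) * (X k ω * X l ω) ∂μ =
      if (k = i ∧ l = j) ∨ (k = j ∧ l = i) then 1 else 0 := by
  by_cases h1 : k = i ∧ l = j
  · obtain ⟨rfl, rfl⟩ := h1
    rw [if_pos (Or.inl ⟨rfl, rfl⟩)]
    have heq : (fun ω => (X k ω * X l ω) * (X k ω * X l ω))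
        = fun ω => X k ω ^ 2 * X l ω ^ 2 := by funext ω; ring
    rw [heq]
    exact integral_sq_sq hmeas hindep hvar hkl
  by_cases h2 : k = j ∧ l = i
  · obtain ⟨rfl, rfl⟩ := h2
    rw [if_pos (Or.inr ⟨rfl, rfl⟩)]
    have heq : (fun ω => (X l ω * X k ω) * (X k ω * X l ω))
        = fun ω => X k ω ^ 2 * X l ω ^ 2 := by funext ω; ring
    rw [heq]
    exact integral_sq_sq hmeas hindep hvar hkl
  rw [if_neg (by tauto)]
  by_cases hki : k = i
  · subst hki
    have hlj : l ≠ j := fun h => h1 ⟨rfl, h⟩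
    have hlk : l ≠ k := fun h => hkl h.symm
    have heq : (fun ω => (X k ω * X j ω) * (X k ω * X l ω))
        = fun ω => X l ω * (X j ω * (X k ω * X k ω)) := by funext ω; ring
    rw [heq]
    exact integral_isolated hmeas hindep hmean hlj hlk hlk
  by_cases hkj : k = j
  · subst hkj
    have hli : l ≠ i := fun h => h2 ⟨rfl, h⟩
    have hlk : l ≠ k := fun h => hkl h.symm
    have heq : (fun ω => (X i ω * X k ω) * (X k ω * X l ω))
        = fun ω => X l ω * (X i ω * (X k ω * X k ω)) := by funext ω; ring
    rw [heq]
    exact integral_isolated hmeas hindep hmean hli hlk hlk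
  · have heq : (fun ω => (X i ω * X j ω) * (X k ω * X l ω))
        = fun ω => X k ω * (X i ω * (X j ω * X l ω)) := by funext ω; ring
    rw [heq]
    exact integral_isolated hmeas hindep hmean hki hkj hkl

end AuxLemmas
section OffDiag

variable {Ω : Type*} [MeasurableSpace Ω] {μ : Measure Ω} [IsProbabilityMeasure μ]
  {n : ℕ} {X : Fin n → Ω → ℝ}

lemma offdiag_bound (hmeas : ∀ k, Measurable (X k))
    (hindep : iIndepFun X μ)
    (hL2 : ∀ k, MemLp (X k) 2 μ)
    (hmean : ∀ k, ∫ ω, X k ω ∂μ = 0)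
    (hvar : ∀ k, ∫ ω, (X k ω) ^ 2 ∂μ = 1)
    (c : Fin n → Fin n → ℂ) (hc : ∀ k, c k k = 0) :
    Integrable (fun ω => Complex.normSq (∑ k, ∑ j, c k j * (X k ω : ℂ) * (X j ω : ℂ))) μ ∧
    ∫ ω, Complex.normSq (∑ k, ∑ j, c k j * (X k ω : ℂ) * (X j ω : ℂ)) ∂μ
      ≤ 2 * ∑ k, ∑ j, Complex.normSq (c k j) := by
  classical
  set G : Ω → ℂ := fun ω => ∑ k, ∑ j, c k j * (X k ω : ℂ) * (X j ω : ℂ) with hG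
  have hGpair : ∀ ω, G ω = ∑ q : Fin n × Fin n, c q.1 q.2 * (X q.1 ω : ℂ) * (X q.2 ω : ℂ) := by
    intro ω; simp [hG, Fintype.sum_prod_type]
  set E4 : (Fin n × Fin n) → (Fin n × Fin n) → ℝ :=
    fun q r => ∫ ω, (X q.1 ω * X q.2 ω) * (X r.1 ω * X r.2 ω) ∂μ with hE4
  have hE4val : ∀ q r : Fin n × Fin n, q.1 ≠ q.2 → r.1 ≠ r.2 →
      E4 q r = if (r.1 = q.1 ∧ r.2 = q.2) ∨ (r.1 = q.2 ∧ r.2 = q.1) then 1 else 0 :=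
    fun q r hq hr => integral_four_eq hmeas hindep hmean hvar hq hr
  have hprod : (fun ω => G ω * (starRingEnd ℂ) (G ω))
      = fun ω => ∑ q : Fin n × Fin n, ∑ r : Fin n × Fin n,
          (c q.1 q.2 * (starRingEnd ℂ) (c r.1 r.2)) *
            (((X q.1 ω * X q.2 ω) * (X r.1 ω * X r.2 ω) : ℝ) : ℂ) := by
    funext ω
    rw [hGpair, map_sum, Finset.sum_mul_sum]
    refine Finset.sum_congr rfl fun q _ => Finset.sum_congr rfl fun r _ => ?_
    simp only [_root_.map_mul, Complex.conj_ofReal]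
    push_cast
    ring
  have hint : ∀ q r : Fin n × Fin n, Integrable (fun ω =>
      (c q.1 q.2 * (starRingEnd ℂ) (c r.1 r.2)) *
        (((X q.1 ω * X q.2 ω) * (X r.1 ω * X r.2 ω) : ℝ) : ℂ)) μ := by
    intro q r
    by_cases hq : q.1 = q.2
    · have h0 : c q.1 q.2 = 0 := by rw [hq]; exact hc q.2
      simp only [h0, zero_mul]
      exact integrable_const 0
    · by_cases hr : r.1 = r.2
      · have h0 : c r.1 r.2 = 0 := by rw [hr]; exact hc r.2
        simp only [h0, map_zero, mul_zero, zero_mul]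
        exact integrable_const 0
      · exact ((integrable_four hmeas hindep hL2 hq hr).ofReal).const_mul _
  have hGint : Integrable (fun ω => G ω * (starRingEnd ℂ) (G ω)) μ := by
    rw [hprod]
    exact integrable_finset_sum _ fun q _ => integrable_finset_sum _ fun r _ => hint q r
  have hnormSqeq : (fun ω => (Complex.normSq (G ω) : ℝ))
      = fun ω => (G ω * (starRingEnd ℂ) (G ω)).re := by
    funext ω; rw [Complex.mul_conj]; simp
  have int1 : Integrable (fun ω => Complex.normSq (G ω)) μ := by
    rw [hnormSqeq]; exact hGint.re
  refine ⟨int1, ?_⟩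
  have hIre : ∫ ω, Complex.normSq (G ω) ∂μ = (∫ ω, G ω * (starRingEnd ℂ) (G ω) ∂μ).re := by
    rw [show (∫ ω, Complex.normSq (G ω) ∂μ) = ∫ ω, (G ω * (starRingEnd ℂ) (G ω)).re ∂μ by
        rw [← hnormSqeq]]
    have := integral_re (μ := μ) hGint
    simpa using this
  have hI : ∫ ω, G ω * (starRingEnd ℂ) (G ω) ∂μ
      = ∑ q : Fin n × Fin n, ∑ r : Fin n × Fin n,
          (c q.1 q.2 * (starRingEnd ℂ) (c r.1 r.2)) * ((E4 q r : ℝ) : ℂ) := by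
    rw [hprod, integral_finset_sum _ fun q _ => integrable_finset_sum _ fun r _ => hint q r]
    refine Finset.sum_congr rfl fun q _ => ?_
    rw [integral_finset_sum _ fun r _ => hint q r]
    refine Finset.sum_congr rfl fun r _ => ?_
    rw [integral_const_mul, hE4, integral_complex_ofReal]
  have hre : ∀ (z : ℂ) (x : ℝ), (z * (x : ℂ)).re = z.re * x := by
    intro z x; simp [Complex.mul_re]
  rw [hIre, hI, Complex.re_sum]
  have hinner : ∀ q : Fin n × Fin n,
      (∑ r : Fin n × Fin n, (c q.1 q.2 * (starRingEnd ℂ) (c r.1 r.2)) * ((E4 q r : ℝ) : ℂ)).re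
        ≤ Complex.normSq (c q.1 q.2) + ‖ c q.1 q.2‖ * ‖ c q.2 q.1‖ := by
    intro q
    rw [Complex.re_sum]
    by_cases hq : q.1 = q.2
    · have h0 : c q.1 q.2 = 0 := by rw [hq]; exact hc q.2
      simp [h0]
    · have hterm : ∀ r : Fin n × Fin n,
          ((c q.1 q.2 * (starRingEnd ℂ) (c r.1 r.2)) * ((E4 q r : ℝ) : ℂ)).re
            = (if r = q then (c q.1 q.2 * (starRingEnd ℂ) (c q.1 q.2)).re else 0)
              + (if r = (q.2, q.1) then (c q.1 q.2 * (starRingEnd ℂ) (c q.2 q.1)).re else 0) := by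
        intro r
        by_cases hr : r.1 = r.2
        · have h0 : c r.1 r.2 = 0 := by rw [hr]; exact hc r.2
          have h1 : r ≠ q := by rintro rfl; exact hq hr
          have h2 : r ≠ (q.2, q.1) := by
            rintro rfl
            exact hq hr.symm
          simp [h0, h1, h2]
        · rw [hre, hE4val q r hq hr]
          rcases eq_or_ne r q with rfl | hrq
          · rw [if_pos (Or.inl ⟨rfl, rfl⟩), if_pos rfl,
              if_neg (fun h => hq (congrArg Prod.fst h)), mul_one, add_zero]
          · rcases eq_or_ne r (q.2, q.1) with rfl | hrq2
            · rw [if_pos (Or.inr ⟨rfl, rfl⟩), if_neg hrq, if_pos rfl, mul_one, zero_add]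
            · rw [if_neg, if_neg hrq, if_neg hrq2, mul_zero, add_zero]
              rintro (⟨ha, hb⟩ | ⟨ha, hb⟩)
              · exact hrq (Prod.ext ha hb)
              · exact hrq2 (Prod.ext ha hb)
      rw [Finset.sum_congr rfl fun r _ => hterm r, Finset.sum_add_distrib,
        Finset.sum_ite_eq' Finset.univ q, Finset.sum_ite_eq' Finset.univ ((q.2, q.1) : Fin n × Fin n)]
      simp only [Finset.mem_univ, if_true]
      have hA : (c q.1 q.2 * (starRingEnd ℂ) (c q.1 q.2)).re = Complex.normSq (c q.1 q.2) := by
        rw [Complex.mul_conj]; simp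
      have hB : (c q.1 q.2 * (starRingEnd ℂ) (c q.2 q.1)).re
          ≤ ‖ c q.1 q.2‖ * ‖ c q.2 q.1‖ := by
        calc (c q.1 q.2 * (starRingEnd ℂ) (c q.2 q.1)).re
            ≤ ‖ c q.1 q.2 * (starRingEnd ℂ) (c q.2 q.1)‖ := Complex.re_le_norm _
          _ = ‖ c q.1 q.2‖ * ‖ c q.2 q.1‖ := by
              rw [norm_mul, Complex.norm_conj]
      rw [hA]
      exact add_le_add_right hB _
  have hswap : ∑ q : Fin n × Fin n, Complex.normSq (c q.2 q.1)
      = ∑ q : Fin n × Fin n, Complex.normSq (c q.1 q.2) :=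
    Fintype.sum_equiv (Equiv.prodComm _ _) _ _ (fun q => rfl)
  have hC : ∑ q : Fin n × Fin n, ‖ c q.1 q.2‖ * ‖ c q.2 q.1‖
      ≤ ∑ q : Fin n × Fin n, Complex.normSq (c q.1 q.2) := by
    have h1 : ∀ q : Fin n × Fin n, ‖ c q.1 q.2‖ * ‖ c q.2 q.1‖
        ≤ (Complex.normSq (c q.1 q.2) + Complex.normSq (c q.2 q.1)) / 2 := by
      intro q
      have h := sq_nonneg (‖ c q.1 q.2‖ - ‖ c q.2 q.1‖)
      have e1 := Complex.sq_norm (c q.1 q.2)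
      have e2 := Complex.sq_norm (c q.2 q.1)
      nlinarith
    refine le_trans (Finset.sum_le_sum fun q _ => h1 q) ?_
    rw [← Finset.sum_div, Finset.sum_add_distrib, hswap]
    linarith
  calc (∑ q : Fin n × Fin n,
        (∑ r : Fin n × Fin n, (c q.1 q.2 * (starRingEnd ℂ) (c r.1 r.2)) * ((E4 q r : ℝ) : ℂ)).re)
      ≤ ∑ q : Fin n × Fin n,
          (Complex.normSq (c q.1 q.2) + ‖ c q.1 q.2‖ * ‖ c q.2 q.1‖) :=
        Finset.sum_le_sum fun q _ => hinner q
    _ = (∑ q : Fin n × Fin n, Complex.normSq (c q.1 q.2))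
        + ∑ q : Fin n × Fin n, ‖ c q.1 q.2‖ * ‖ c q.2 q.1‖ :=
        Finset.sum_add_distrib
    _ ≤ (∑ q : Fin n × Fin n, Complex.normSq (c q.1 q.2))
        + ∑ q : Fin n × Fin n, Complex.normSq (c q.1 q.2) := by linarith
    _ = 2 * ∑ k, ∑ j, Complex.normSq (c k j) := by
        rw [Fintype.sum_prod_type]; ring

end OffDiag
section Diag

variable {Ω : Type*} [MeasurableSpace Ω] {μ : Measure Ω} [IsProbabilityMeasure μ] {n : ℕ}

lemma diag_bound (V : Fin n → Ω → ℝ) (hVmeas : ∀ k, Measurable (V k))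
    (hVindep : iIndepFun V μ)
    (hVint : ∀ k, Integrable (V k) μ) (hVzero : ∀ k, ∫ ω, V k ω ∂μ = 0)
    (hVsq : ∀ k, Integrable (fun ω => V k ω ^ 2) μ)
    (d : Fin n → ℂ) :
    Integrable (fun ω => Complex.normSq (∑ k, d k * (V k ω : ℂ))) μ ∧
    ∫ ω, Complex.normSq (∑ k, d k * (V k ω : ℂ)) ∂μ
      ≤ ∑ k, Complex.normSq (d k) * ∫ ω, V k ω ^ 2 ∂μ := by
  classical
  set U : Ω → ℂ := fun ω => ∑ k, d k * (V k ω : ℂ) with hU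
  set EV : Fin n → Fin n → ℝ := fun k l => ∫ ω, V k ω * V l ω ∂μ with hEV
  have hprod : (fun ω => U ω * (starRingEnd ℂ) (U ω))
      = fun ω => ∑ k, ∑ l, (d k * (starRingEnd ℂ) (d l)) * ((V k ω * V l ω : ℝ) : ℂ) := by
    funext ω
    rw [hU]
    rw [map_sum, Finset.sum_mul_sum]
    refine Finset.sum_congr rfl fun k _ => Finset.sum_congr rfl fun l _ => ?_
    simp only [_root_.map_mul, Complex.conj_ofReal]
    push_cast
    ring
  have hint : ∀ k l : Fin n, Integrable (fun ω =>
      (d k * (starRingEnd ℂ) (d l)) * ((V k ω * V l ω : ℝ) : ℂ)) μ := by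
    intro k l
    rcases eq_or_ne k l with rfl | hkl
    · have heq : (fun ω => (d k * (starRingEnd ℂ) (d k)) * ((V k ω * V k ω : ℝ) : ℂ))
          = fun ω => (d k * (starRingEnd ℂ) (d k)) * ((V k ω ^ 2 : ℝ) : ℂ) := by
        funext ω; rw [sq]
      rw [heq]
      exact ((hVsq k).ofReal).const_mul _
    · exact (((hVindep.indepFun hkl).integrable_mul (hVint k) (hVint l)).ofReal).const_mul _
  have hUint : Integrable (fun ω => U ω * (starRingEnd ℂ) (U ω)) μ := by
    rw [hprod]
    exact integrable_finset_sum _ fun k _ => integrable_finset_sum _ fun l _ => hint k l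
  have hnormSqeq : (fun ω => Complex.normSq (U ω))
      = fun ω => (U ω * (starRingEnd ℂ) (U ω)).re := by
    funext ω; rw [Complex.mul_conj]; simp
  have int1 : Integrable (fun ω => Complex.normSq (U ω)) μ := by
    rw [hnormSqeq]; exact hUint.re
  refine ⟨int1, ?_⟩
  have hIre : ∫ ω, Complex.normSq (U ω) ∂μ = (∫ ω, U ω * (starRingEnd ℂ) (U ω) ∂μ).re := by
    rw [show (∫ ω, Complex.normSq (U ω) ∂μ) = ∫ ω, (U ω * (starRingEnd ℂ) (U ω)).re ∂μ by
        rw [← hnormSqeq]]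
    simpa using integral_re (μ := μ) hUint
  have hEVval : ∀ k l : Fin n, k ≠ l → EV k l = 0 := by
    intro k l hkl
    show ∫ ω, V k ω * V l ω ∂μ = 0
    rw [(hVindep.indepFun hkl).integral_fun_mul_eq_mul_integral (hVmeas k).aestronglyMeasurable
      (hVmeas l).aestronglyMeasurable, hVzero k, zero_mul]
  have hI : ∫ ω, U ω * (starRingEnd ℂ) (U ω) ∂μ
      = ∑ k, ∑ l, (d k * (starRingEnd ℂ) (d l)) * ((EV k l : ℝ) : ℂ) := by
    rw [hprod, integral_finset_sum _ fun k _ => integrable_finset_sum _ fun l _ => hint k l]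
    refine Finset.sum_congr rfl fun k _ => ?_
    rw [integral_finset_sum _ fun l _ => hint k l]
    refine Finset.sum_congr rfl fun l _ => ?_
    rw [integral_const_mul, hEV, integral_complex_ofReal]
  rw [hIre, hI, Complex.re_sum]
  have hinner : ∀ k : Fin n,
      (∑ l, (d k * (starRingEnd ℂ) (d l)) * ((EV k l : ℝ) : ℂ)).re
        = Complex.normSq (d k) * EV k k := by
    intro k
    rw [Complex.re_sum]
    have hterm : ∀ l : Fin n,
        ((d k * (starRingEnd ℂ) (d l)) * ((EV k l : ℝ) : ℂ)).re
          = if l = k then Complex.normSq (d k) * EV k k else 0 := by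
      intro l
      rcases eq_or_ne l k with rfl | hlk
      · rw [if_pos rfl, Complex.mul_conj]
        simp [Complex.mul_re]
      · rw [if_neg hlk, hEVval k l (Ne.symm hlk)]
        simp
    rw [Finset.sum_congr rfl fun l _ => hterm l, Finset.sum_ite_eq' Finset.univ k]
    simp
  rw [Finset.sum_congr rfl fun k _ => hinner k]
  refine Finset.sum_le_sum fun k _ => ?_
  have : EV k k = ∫ ω, V k ω ^ 2 ∂μ := by
    show (∫ ω, V k ω * V k ω ∂μ) = ∫ ω, V k ω ^ 2 ∂μ
    refine integral_congr_ae (ae_of_all μ fun ω => ?_)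
    show V k ω * V k ω = V k ω ^ 2
    rw [sq]
  rw [this]

end Diag

section MatrixBounds

lemma column_bound {n : ℕ} (A : Matrix (Fin n) (Fin n) ℂ) {M : ℝ}
    (hM : ‖Matrix.toEuclideanCLM (𝕜 := ℂ) A‖ ≤ M) (j : Fin n) :
    ∑ k, Complex.normSq (A k j) ≤ M ^ 2 := by
  classical
  set v : EuclideanSpace ℂ (Fin n) := EuclideanSpace.single j 1 with hv
  have hnv : ‖v‖ = 1 := by rw [hv, EuclideanSpace.norm_single, norm_one]
  have happ : ∀ k, (Matrix.toEuclideanCLM (𝕜 := ℂ) A) v k = A k j := by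
    intro k
    have h1 : (Matrix.toEuclideanCLM (𝕜 := ℂ) A) v
        = WithLp.toLp 2 (A.mulVec (WithLp.ofLp v)) := rfl
    rw [h1]
    show (A.mulVec (WithLp.ofLp v)) k = A k j
    have h2 : (WithLp.ofLp v) = fun l => if l = j then 1 else 0 := by
      funext l
      rw [hv]
      simp [EuclideanSpace.single_apply]
    rw [h2]
    simp [Matrix.mulVec, dotProduct, mul_ite, Finset.sum_ite_eq']
  have hB : ‖(Matrix.toEuclideanCLM (𝕜 := ℂ) A) v‖ ≤ M := by
    calc ‖(Matrix.toEuclideanCLM (𝕜 := ℂ) A) v‖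
        ≤ ‖Matrix.toEuclideanCLM (𝕜 := ℂ) A‖ * ‖v‖ := ContinuousLinearMap.le_opNorm _ _
      _ ≤ M := by rw [hnv, mul_one]; exact hM
  have hsum : ∑ k, Complex.normSq (A k j) = ‖(Matrix.toEuclideanCLM (𝕜 := ℂ) A) v‖ ^ 2 := by
    rw [EuclideanSpace.norm_eq, Real.sq_sqrt (by positivity)]
    refine Finset.sum_congr rfl fun k _ => ?_
    rw [happ k, ← Complex.sq_norm]
  rw [hsum]
  have h0 : (0 : ℝ) ≤ ‖(Matrix.toEuclideanCLM (𝕜 := ℂ) A) v‖ := norm_nonneg _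
  nlinarith

lemma entry_bound {n : ℕ} (A : Matrix (Fin n) (Fin n) ℂ) {M : ℝ} (hM0 : 0 ≤ M)
    (hM : ‖Matrix.toEuclideanCLM (𝕜 := ℂ) A‖ ≤ M) (k j : Fin n) :
    ‖ A k j‖ ≤ M := by
  have h1 : Complex.normSq (A k j) ≤ M ^ 2 := by
    refine le_trans ?_ (column_bound A hM j)
    exact Finset.single_le_sum (f := fun k => Complex.normSq (A k j))
      (fun i _ => Complex.normSq_nonneg _) (Finset.mem_univ k)
  rw [← Complex.sq_norm] at h1
  nlinarith [norm_nonneg (A k j)]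

lemma frob_bound {n : ℕ} (A : Matrix (Fin n) (Fin n) ℂ) {M : ℝ}
    (hM : ‖Matrix.toEuclideanCLM (𝕜 := ℂ) A‖ ≤ M) :
    ∑ k, ∑ j, Complex.normSq (A k j) ≤ n * M ^ 2 := by
  rw [Finset.sum_comm]
  calc ∑ j, ∑ k, Complex.normSq (A k j) ≤ ∑ _j : Fin n, M ^ 2 :=
        Finset.sum_le_sum fun j _ => column_bound A hM j
    _ = n * M ^ 2 := by simp [Finset.sum_const]

end MatrixBounds
set_option maxHeartbeats 1000000 in
theorem condition_A_from_lindeberg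
    {Ω : Type*} [MeasureSpace Ω] (μ : Measure Ω) [IsProbabilityMeasure μ]
    (X : (p : ℕ) → Fin p → Ω → ℝ)
    (hmeas : ∀ p k, Measurable (X p k))
    (hindep : ∀ p, iIndepFun (X p) μ)
    (hL2 : ∀ p k, MemLp (X p k) 2 μ)
    (hmean : ∀ p k, ∫ ω, X p k ω ∂μ = 0)
    (hvar : ∀ p k, ∫ ω, (X p k ω) ^ 2 ∂μ = 1)
    (hlindeberg : ∀ ε : ℝ, 0 < ε →
      Tendsto (fun p : ℕ =>
        (1 / (p : ℝ)) * ∑ k : Fin p,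
          ∫ ω, (if ε * Real.sqrt p < |X p k ω| then (X p k ω) ^ 2 else 0) ∂μ)
        atTop (nhds 0))
    (A : (p : ℕ) → Matrix (Fin p) (Fin p) ℂ)
    (hA : ∃ M : ℝ, ∀ p, ‖Matrix.toEuclideanCLM (𝕜 := ℂ) (A p)‖ ≤ M) :
    ∀ ε : ℝ, 0 < ε →
      Tendsto (fun p : ℕ =>
        μ {ω | ε ≤ ‖
          ((∑ k : Fin p, ∑ j : Fin p, A p k j * (X p k ω : ℂ) * (X p j ω : ℂ)) -
            Matrix.trace (A p)) / (p : ℂ)‖})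
        atTop (nhds 0) := by
  classical
  intro ε hε
  obtain ⟨M, hM⟩ := hA
  have hM0 : 0 ≤ M := le_trans (norm_nonneg _) (hM 0)
  rw [ENNReal.tendsto_nhds_zero]
  intro η hη
  obtain ⟨r, hr0, hrη⟩ : ∃ r : ℝ, 0 < r ∧ ENNReal.ofReal r ≤ η := by
    rcases eq_or_ne η ⊤ with h | h
    · exact ⟨1, one_pos, by simp [h]⟩
    · exact ⟨η.toReal, ENNReal.toReal_pos hη.ne' h, by rw [ENNReal.ofReal_toReal h]⟩
  set δ : ℝ := Real.sqrt (r * ε ^ 2 / (27 * (M ^ 2 + 1))) with hδdef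
  have hδpos : 0 < δ := Real.sqrt_pos.mpr (by positivity)
  have hδsq : δ ^ 2 = r * ε ^ 2 / (27 * (M ^ 2 + 1)) := Real.sq_sqrt (by positivity)
  have hδ3 : 9 * M ^ 2 * δ ^ 2 / ε ^ 2 ≤ r / 3 := by
    rw [hδsq, div_le_div_iff₀ (by positivity) (by norm_num)]
    have h2 : M ^ 2 / (M ^ 2 + 1) ≤ 1 := by
      rw [div_le_one (by positivity)]; linarith
    calc 9 * M ^ 2 * (r * ε ^ 2 / (27 * (M ^ 2 + 1))) * 3
        = M ^ 2 / (M ^ 2 + 1) * (r * ε ^ 2) := by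
          field_simp
          ring
      _ ≤ 1 * (r * ε ^ 2) := mul_le_mul_of_nonneg_right h2 (by positivity)
      _ = r * ε ^ 2 := one_mul _
  have hev1 : ∀ᶠ p : ℕ in atTop, (18 * M ^ 2 / ε ^ 2) / (p : ℝ) < r / 3 :=
    (tendsto_const_div_atTop_nhds_zero_nat _).eventually_lt_const (by positivity)
  have hev2 : ∀ᶠ p : ℕ in atTop, (6 * M / ε) *
      ((1 / (p : ℝ)) * ∑ k : Fin p,
        ∫ ω, (if δ * Real.sqrt p < |X p k ω| then (X p k ω) ^ 2 else 0) ∂μ) < r / 3 := by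
    have hl2 := (hlindeberg δ hδpos).const_mul (6 * M / ε)
    rw [mul_zero] at hl2
    exact hl2.eventually_lt_const (by positivity)
  filter_upwards [hev1, hev2, eventually_ge_atTop 1] with p h1 h2 hp1
  have hp0 : (0 : ℝ) < p := by exact_mod_cast hp1
  have hεne : ε ≠ 0 := ne_of_gt hε
  have hpne : (p : ℝ) ≠ 0 := ne_of_gt hp0
  have harithO : (2 * ((p : ℝ) * M ^ 2)) / (ε * (p : ℝ) / 3) ^ 2
      = (18 * M ^ 2 / ε ^ 2) / (p : ℝ) := by
    field_simp
    ring
  have harithT : ∀ S : ℝ, (M * (2 * S)) / (ε * (p : ℝ) / 3)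
      = (6 * M / ε) * ((1 / (p : ℝ)) * S) := by
    intro S
    field_simp
    ring
  have harithU : (M ^ 2 * δ ^ 2 * (p : ℝ) ^ 2) / (ε * (p : ℝ) / 3) ^ 2
      = 9 * M ^ 2 * δ ^ 2 / ε ^ 2 := by
    field_simp
    ring
  -- abbreviations
  set a : Matrix (Fin p) (Fin p) ℂ := A p with ha
  have hMa : ‖Matrix.toEuclideanCLM (𝕜 := ℂ) a‖ ≤ M := by rw [ha]; exact hM p
  set c : Fin p → Fin p → ℂ := fun k j => if k = j then 0 else a k j with hcdef
  set Zf : Fin p → Ω → ℝ :=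
    fun k ω => if δ * Real.sqrt p < |X p k ω| then X p k ω ^ 2 else 0 with hZfdef
  set Yf : Fin p → Ω → ℝ :=
    fun k ω => if δ * Real.sqrt p < |X p k ω| then 0 else X p k ω ^ 2 with hYfdef
  have hZfmeas : ∀ k, Measurable (Zf k) := by
    intro k
    exact Measurable.ite (measurableSet_lt measurable_const (hmeas p k).abs)
      ((hmeas p k).pow_const 2) measurable_const
  have hYfmeas : ∀ k, Measurable (Yf k) := by
    intro k
    exact Measurable.ite (measurableSet_lt measurable_const (hmeas p k).abs)
      measurable_const ((hmeas p k).pow_const 2)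
  have hZfnonneg : ∀ k ω, 0 ≤ Zf k ω := by
    intro k ω
    rw [hZfdef]
    dsimp only
    split <;> simp [sq_nonneg]
  have hYfnonneg : ∀ k ω, 0 ≤ Yf k ω := by
    intro k ω
    rw [hYfdef]
    dsimp only
    split <;> simp [sq_nonneg]
  have hZfle : ∀ k ω, Zf k ω ≤ X p k ω ^ 2 := by
    intro k ω
    rw [hZfdef]
    dsimp only
    split <;> simp [sq_nonneg]
  have hYfle : ∀ k ω, Yf k ω ≤ X p k ω ^ 2 := by
    intro k ω
    rw [hYfdef]
    dsimp only
    split <;> simp [sq_nonneg]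
  have hYZ : ∀ k ω, Yf k ω + Zf k ω = X p k ω ^ 2 := by
    intro k ω
    rw [hZfdef, hYfdef]
    dsimp only
    split <;> ring
  have hYfb : ∀ k ω, Yf k ω ≤ δ ^ 2 * p := by
    intro k ω
    rw [hYfdef]
    dsimp only
    split
    · positivity
    · rename_i h
      push_neg at h
      have h2 : |X p k ω| ^ 2 ≤ (δ * Real.sqrt p) ^ 2 := by
        have h0 : (0 : ℝ) ≤ |X p k ω| := abs_nonneg _
        nlinarith
      rw [sq_abs] at h2
      calc X p k ω ^ 2 ≤ (δ * Real.sqrt p) ^ 2 := h2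
        _ = δ ^ 2 * p := by
            rw [mul_pow, Real.sq_sqrt (Nat.cast_nonneg p)]
  have hZfint : ∀ k, Integrable (Zf k) μ := by
    intro k
    refine (hL2 p k).integrable_sq.mono' (hZfmeas k).aestronglyMeasurable
      (ae_of_all _ fun ω => ?_)
    rw [Real.norm_eq_abs, abs_of_nonneg (hZfnonneg k ω)]
    exact hZfle k ω
  have hYfint : ∀ k, Integrable (Yf k) μ := by
    intro k
    refine (hL2 p k).integrable_sq.mono' (hYfmeas k).aestronglyMeasurable
      (ae_of_all _ fun ω => ?_)
    rw [Real.norm_eq_abs, abs_of_nonneg (hYfnonneg k ω)]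
    exact hYfle k ω
  set mZ : Fin p → ℝ := fun k => ∫ ω, Zf k ω ∂μ with hmZdef
  set mY : Fin p → ℝ := fun k => ∫ ω, Yf k ω ∂μ with hmYdef
  have hmZ0 : ∀ k, 0 ≤ mZ k := fun k => integral_nonneg (hZfnonneg k)
  have hmY0 : ∀ k, 0 ≤ mY k := fun k => integral_nonneg (hYfnonneg k)
  have hmYZ : ∀ k, mY k + mZ k = 1 := by
    intro k
    rw [hmYdef, hmZdef]
    dsimp only
    rw [← integral_add (hYfint k) (hZfint k)]
    rw [show (fun ω => Yf k ω + Zf k ω) = fun ω => X p k ω ^ 2 from funext (hYZ k)]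
    exact hvar p k
  set W : Fin p → Ω → ℝ := fun k ω => Yf k ω - mY k with hWdef
  have hWmeas : ∀ k, Measurable (W k) := fun k => (hYfmeas k).sub measurable_const
  have hWindep : iIndepFun W μ := by
    have h := (hindep p).comp
      (fun k => fun x : ℝ => (if δ * Real.sqrt p < |x| then 0 else x ^ 2) - mY k)
      (fun k => (Measurable.ite (measurableSet_lt measurable_const measurable_abs)
        measurable_const (measurable_id.pow_const 2)).sub measurable_const)
    exact h
  have hWint : ∀ k, Integrable (W k) μ := fun k => (hYfint k).sub (integrable_const _)
  have hWzero : ∀ k, ∫ ω, W k ω ∂μ = 0 := by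
    intro k
    rw [hWdef]
    dsimp only
    rw [integral_sub (hYfint k) (integrable_const _), integral_const]
    simp [← hmYdef]
    exact sub_self _
  have hYfsq_int : ∀ k, Integrable (fun ω => Yf k ω ^ 2) μ := by
    intro k
    refine ((hL2 p k).integrable_sq.const_mul (δ ^ 2 * p)).mono'
      ((hYfmeas k).pow_const 2).aestronglyMeasurable (ae_of_all _ fun ω => ?_)
    rw [Real.norm_eq_abs, abs_of_nonneg (sq_nonneg _)]
    calc Yf k ω ^ 2 = Yf k ω * Yf k ω := sq (Yf k ω) ▸ rfl
      _ ≤ (δ ^ 2 * p) * X p k ω ^ 2 :=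
          mul_le_mul (hYfb k ω) (hYfle k ω) (hYfnonneg k ω) (by positivity)
  have hWsq_eq : ∀ k, (fun ω => W k ω ^ 2)
      = fun ω => Yf k ω ^ 2 - (2 * mY k) * Yf k ω + mY k ^ 2 := by
    intro k
    funext ω
    rw [hWdef]
    dsimp only
    ring
  have hWsq_int : ∀ k, Integrable (fun ω => W k ω ^ 2) μ := by
    intro k
    rw [hWsq_eq k]
    exact ((hYfsq_int k).sub ((hYfint k).const_mul _)).add (integrable_const _)
  have hYfsq_bd : ∀ k, ∫ ω, Yf k ω ^ 2 ∂μ ≤ δ ^ 2 * p := by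
    intro k
    calc ∫ ω, Yf k ω ^ 2 ∂μ ≤ ∫ ω, (δ ^ 2 * p) * X p k ω ^ 2 ∂μ := by
          refine integral_mono (hYfsq_int k) ((hL2 p k).integrable_sq.const_mul _) fun ω => ?_
          calc Yf k ω ^ 2 = Yf k ω * Yf k ω := (sq (Yf k ω))
            _ ≤ (δ ^ 2 * p) * X p k ω ^ 2 :=
                mul_le_mul (hYfb k ω) (hYfle k ω) (hYfnonneg k ω) (by positivity)
      _ = δ ^ 2 * p := by rw [integral_const_mul, hvar p k, mul_one]
  have hWsq_bd : ∀ k, ∫ ω, W k ω ^ 2 ∂μ ≤ δ ^ 2 * p := by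
    intro k
    have e2 : Integrable (fun ω => 2 * mY k * Yf k ω) μ := (hYfint k).const_mul _
    have e1 : Integrable (fun ω => Yf k ω ^ 2 - 2 * mY k * Yf k ω) μ := (hYfsq_int k).sub e2
    have hcomp : ∫ ω, W k ω ^ 2 ∂μ = ∫ ω, Yf k ω ^ 2 ∂μ - mY k ^ 2 := by
      rw [hWsq_eq k]
      rw [integral_add e1 (integrable_const _), integral_sub (hYfsq_int k) e2,
        integral_const_mul, integral_const]
      have h5 : ∫ ω, Yf k ω ∂μ = mY k := by rw [hmYdef]
      rw [h5]
      simp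
      ring
    rw [hcomp]
    have := hYfsq_bd k
    nlinarith [sq_nonneg (mY k)]
  -- the three pieces
  set O : Ω → ℂ := fun ω => ∑ k, ∑ j, c k j * (X p k ω : ℂ) * (X p j ω : ℂ) with hOdef
  set T : Ω → ℂ := fun ω => ∑ k, a k k * ((Zf k ω - mZ k : ℝ) : ℂ) with hTdef
  set U : Ω → ℂ := fun ω => ∑ k, a k k * ((W k ω : ℝ) : ℂ) with hUdef
  have htrace : Matrix.trace a = ∑ k, a k k := rfl
  have hdecomp : ∀ ω, (∑ k, ∑ j, a k j * (X p k ω : ℂ) * (X p j ω : ℂ)) - Matrix.trace a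
      = O ω + (T ω + U ω) := by
    intro ω
    have h1 : (∑ k, ∑ j, a k j * (X p k ω : ℂ) * (X p j ω : ℂ))
        = O ω + ∑ k, a k k * (X p k ω : ℂ) * (X p k ω : ℂ) := by
      rw [hOdef]
      dsimp only
      rw [← Finset.sum_add_distrib]
      refine Finset.sum_congr rfl fun k _ => ?_
      rw [show (a k k * (X p k ω : ℂ) * (X p k ω : ℂ))
          = ∑ j, (if j = k then a k j * (X p k ω : ℂ) * (X p j ω : ℂ) else 0) by
            rw [Finset.sum_ite_eq' Finset.univ k]; simp]
      rw [← Finset.sum_add_distrib]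
      refine Finset.sum_congr rfl fun j _ => ?_
      rcases eq_or_ne k j with rfl | hkj
      · simp [hcdef]
      · simp [hcdef, hkj, Ne.symm hkj]
    have h3 : T ω + U ω = ∑ k, a k k * ((X p k ω ^ 2 - 1 : ℝ) : ℂ) := by
      rw [hTdef, hUdef]
      dsimp only
      rw [← Finset.sum_add_distrib]
      refine Finset.sum_congr rfl fun k _ => ?_
      rw [← mul_add]
      congr 1
      rw [← Complex.ofReal_add]
      congr 1
      have hmz := hmYZ k
      have hyz := hYZ k ω
      rw [hWdef]
      dsimp only
      linarith
    rw [h1, htrace, h3, add_sub_assoc, ← Finset.sum_sub_distrib]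
    congr 1
    refine Finset.sum_congr rfl fun k _ => ?_
    push_cast
    ring
  have ht3 : (0 : ℝ) < ε * p / 3 := by positivity
  set S1 := {ω : Ω | ε * p / 3 ≤ ‖ O ω‖} with hS1def
  set S2 := {ω : Ω | ε * p / 3 ≤ ‖ T ω‖} with hS2def
  set S3 := {ω : Ω | ε * p / 3 ≤ ‖ U ω‖} with hS3def
  have hsub : {ω : Ω | ε ≤ ‖
      ((∑ k, ∑ j, a k j * (X p k ω : ℂ) * (X p j ω : ℂ)) - Matrix.trace a) / (p : ℂ)‖}
      ⊆ S1 ∪ S2 ∪ S3 := by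
    intro ω hω
    simp only [Set.mem_setOf_eq] at hω
    rw [norm_div, Complex.norm_natCast] at hω
    have hnum : ε * p ≤ ‖
        (∑ k, ∑ j, a k j * (X p k ω : ℂ) * (X p j ω : ℂ)) - Matrix.trace a‖ :=
      (le_div_iff₀ hp0).mp hω
    rw [hdecomp ω] at hnum
    by_contra hcon
    simp only [Set.mem_union, Set.mem_setOf_eq, not_or, not_le, hS1def, hS2def, hS3def] at hcon
    obtain ⟨⟨hc1, hc2⟩, hc3⟩ := hcon
    have ht1 := norm_add_le (O ω) (T ω + U ω)
    have ht2 := norm_add_le (T ω) (U ω)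
    linarith
  -- bound for S1
  obtain ⟨hOint, hObd⟩ := offdiag_bound (fun k => hmeas p k) (hindep p) (fun k => hL2 p k)
    (fun k => hmean p k) (fun k => hvar p k) c (fun k => by rw [hcdef]; simp)
  have hS1b : μ S1 ≤ ENNReal.ofReal (r / 3) := by
    refine le_trans (cheb_complex O hOint ht3) (ENNReal.ofReal_le_ofReal ?_)
    have hcle : (∑ k, ∑ j, Complex.normSq (c k j)) ≤ ∑ k, ∑ j, Complex.normSq (a k j) := by
      refine Finset.sum_le_sum fun k _ => Finset.sum_le_sum fun j _ => ?_
      rw [hcdef]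
      dsimp only
      split
      · simp [Complex.normSq_nonneg]
      · exact le_refl _
    have hfro := frob_bound a hMa
    have hOb2 : ∫ ω, Complex.normSq (O ω) ∂μ ≤ 2 * ((p : ℝ) * M ^ 2) := by
      refine le_trans hObd ?_
      linarith [hcle, hfro]
    calc (∫ ω, Complex.normSq (O ω) ∂μ) / (ε * (p : ℝ) / 3) ^ 2
        ≤ (2 * ((p : ℝ) * M ^ 2)) / (ε * (p : ℝ) / 3) ^ 2 :=
          (div_le_div_iff_of_pos_right (by positivity)).mpr hOb2
      _ = (18 * M ^ 2 / ε ^ 2) / (p : ℝ) := harithO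
      _ ≤ r / 3 := h1.le
  -- bound for S2
  have haM : ∀ k : Fin p, ‖ a k k‖ ≤ M := fun k => entry_bound a hM0 hMa k k
  have hTsummand_int : ∀ k : Fin p,
      Integrable (fun ω => a k k * ((Zf k ω - mZ k : ℝ) : ℂ)) μ :=
    fun k => (((hZfint k).sub (integrable_const _)).ofReal).const_mul _
  have hTint : Integrable T μ := by
    rw [hTdef]
    exact integrable_finset_sum _ fun k _ => hTsummand_int k
  have hTabs_int : Integrable (fun ω => ‖ T ω‖) μ := by
    have h := hTint.norm
    simpa using h
  have hZabs_int : ∀ k : Fin p, Integrable (fun ω => |Zf k ω - mZ k|) μ := by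
    intro k
    have h := ((hZfint k).sub (integrable_const (mZ k))).abs
    simpa using h
  have hZabs_bd : ∀ k : Fin p, ∫ ω, |Zf k ω - mZ k| ∂μ ≤ 2 * mZ k := by
    intro k
    calc ∫ ω, |Zf k ω - mZ k| ∂μ ≤ ∫ ω, Zf k ω + mZ k ∂μ := by
          refine integral_mono (hZabs_int k) ((hZfint k).add (integrable_const _)) fun ω => ?_
          calc |Zf k ω - mZ k| ≤ |Zf k ω| + |mZ k| := abs_sub _ _
            _ = Zf k ω + mZ k := by
                rw [abs_of_nonneg (hZfnonneg k ω), abs_of_nonneg (hmZ0 k)]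
      _ = 2 * mZ k := by
          rw [integral_add (hZfint k) (integrable_const _), integral_const]
          have : ∫ ω, Zf k ω ∂μ = mZ k := by rw [hmZdef]
          rw [this]
          simp
          ring
  have hTl1 : ∫ ω, ‖ T ω‖ ∂μ ≤ M * (2 * ∑ k, mZ k) := by
    calc ∫ ω, ‖ T ω‖ ∂μ
        ≤ ∫ ω, ∑ k, ‖ a k k‖ * |Zf k ω - mZ k| ∂μ := by
          refine integral_mono hTabs_int
            (integrable_finset_sum _ fun k _ => (hZabs_int k).const_mul _) fun ω => ?_
          rw [hTdef]
          dsimp only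
          refine le_trans (norm_sum_le _ _) ?_
          refine Finset.sum_le_sum fun k _ => ?_
          rw [norm_mul, Complex.norm_real, Real.norm_eq_abs]
      _ = ∑ k, ‖ a k k‖ * ∫ ω, |Zf k ω - mZ k| ∂μ := by
          rw [integral_finset_sum _ fun k _ => (hZabs_int k).const_mul _]
          exact Finset.sum_congr rfl fun k _ => integral_const_mul _ _
      _ ≤ ∑ k, M * (2 * mZ k) := by
          refine Finset.sum_le_sum fun k _ => ?_
          refine mul_le_mul (haM k) (hZabs_bd k) (integral_nonneg fun ω => abs_nonneg _) hM0
      _ = M * (2 * ∑ k, mZ k) := by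
          simp only [Finset.mul_sum]
  have hS2b : μ S2 ≤ ENNReal.ofReal (r / 3) := by
    refine le_trans (markov_meas _ (fun ω => norm_nonneg _) hTabs_int ht3)
      (ENNReal.ofReal_le_ofReal ?_)
    have hmZsum : 0 ≤ ∑ k, mZ k := Finset.sum_nonneg fun k _ => hmZ0 k
    calc (∫ ω, ‖ T ω‖ ∂μ) / (ε * (p : ℝ) / 3)
        ≤ (M * (2 * ∑ k, mZ k)) / (ε * (p : ℝ) / 3) := (div_le_div_iff_of_pos_right ht3).mpr hTl1
      _ = (6 * M / ε) * ((1 / (p : ℝ)) * ∑ k, mZ k) := harithT _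
      _ ≤ r / 3 := by
          have hh : (6 * M / ε) *
              ((1 / (p : ℝ)) * ∑ k : Fin p, ∫ ω, Zf k ω ∂μ) < r / 3 := h2
          have : (fun k : Fin p => ∫ ω, Zf k ω ∂μ) = mZ := by rw [hmZdef]
          rw [this] at hh
          exact hh.le
  -- bound for S3
  obtain ⟨hUint2, hUbd⟩ := diag_bound W hWmeas hWindep hWint hWzero hWsq_int (fun k => a k k)
  have hS3b : μ S3 ≤ ENNReal.ofReal (r / 3) := by
    refine le_trans (cheb_complex U hUint2 ht3) (ENNReal.ofReal_le_ofReal ?_)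
    have hsum : (∑ k, Complex.normSq (a k k) * ∫ ω, W k ω ^ 2 ∂μ)
        ≤ (p : ℝ) * (M ^ 2 * (δ ^ 2 * (p : ℝ))) := by
      calc (∑ k, Complex.normSq (a k k) * ∫ ω, W k ω ^ 2 ∂μ)
          ≤ ∑ _k : Fin p, M ^ 2 * (δ ^ 2 * (p : ℝ)) := by
            refine Finset.sum_le_sum fun k _ => ?_
            have hn : Complex.normSq (a k k) ≤ M ^ 2 := by
              have := haM k
              rw [← Complex.sq_norm]
              nlinarith [norm_nonneg (a k k)]
            refine mul_le_mul hn (hWsq_bd k) ?_ (by positivity)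
            exact integral_nonneg fun ω => sq_nonneg _
        _ = (p : ℝ) * (M ^ 2 * (δ ^ 2 * (p : ℝ))) := by
            rw [Finset.sum_const, Finset.card_univ, Fintype.card_fin, nsmul_eq_mul]
    have hUb2 : ∫ ω, Complex.normSq (U ω) ∂μ ≤ M ^ 2 * δ ^ 2 * (p : ℝ) ^ 2 := by
      refine le_trans hUbd (le_trans hsum ?_)
      nlinarith [sq_nonneg ((p : ℝ) * M * δ)]
    calc (∫ ω, Complex.normSq (U ω) ∂μ) / (ε * (p : ℝ) / 3) ^ 2
        ≤ (M ^ 2 * δ ^ 2 * (p : ℝ) ^ 2) / (ε * (p : ℝ) / 3) ^ 2 :=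
          (div_le_div_iff_of_pos_right (by positivity)).mpr hUb2
      _ = 9 * M ^ 2 * δ ^ 2 / ε ^ 2 := harithU
      _ ≤ r / 3 := hδ3
  calc μ {ω : Ω | ε ≤ ‖ ((∑ k, ∑ j, a k j * (X p k ω : ℂ) * (X p j ω : ℂ)) - Matrix.trace a) / (p : ℂ)‖}
      ≤ μ (S1 ∪ S2 ∪ S3) := measure_mono hsub
    _ ≤ μ (S1 ∪ S2) + μ S3 := measure_union_le _ _
    _ ≤ (μ S1 + μ S2) + μ S3 := add_le_add_left (measure_union_le _ _) _
    _ ≤ (ENNReal.ofReal (r / 3) + ENNReal.ofReal (r / 3)) + ENNReal.ofReal (r / 3) :=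
        add_le_add (add_le_add hS1b hS2b) hS3b
    _ = ENNReal.ofReal r := by
        rw [← ENNReal.ofReal_add (by positivity) (by positivity),
          ← ENNReal.ofReal_add (by positivity) (by positivity)]
        congr 1
        ring
    _ ≤ η := hrη
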